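/- arXiv:1707.04567 — 5 statements merged into one kernel-verified Lean document; each statement's English description precedes it below -/
import Mathlib

section
/- Consider T time intervals and J cycle-depth segments with segment capacities ē_j ≥ 0 (j = 1,…,J), nondecreasing marginal aging costs c_1 ≤ c_2 ≤ … ≤ c_J, interval duration M > 0, charge and discharge efficiencies η^ch, η^dis ∈ (0,1], an initial stored energy e_0 with 0 ≤ e_0 ≤ ∑_j ē_j, and a dispatch profile d_t ≥ 0, g_t ≥ 0 (t = 1,…,T) such that for each t at most one of d_t, g_t is nonzero and the implied energy levels e_t = e_0 + ∑_{s=1}^{t} M(η^ch d_s − g_s/η^dis) satisfy 0 ≤ e_t ≤ ∑_j ē_j for all t. Define the greedy (shallowest-segment-first) policy recursively: ê_{0,j} = min(ē_j, max(0, e_0 − ∑_{ζ<j} ê_{0,ζ})), and for each t (in increasing j) p̂ch_{t,j} = min(d_t − ∑_{ζ<j} p̂ch_{t,ζ}, (ē_j − ê_{t−1,j})/(η^ch M)), p̂dis_{t,j} = min(g_t − ∑_{ζ<j} p̂dis_{t,ζ}, η^dis ê_{t−1,j}/M), ê_{t,j} = ê_{t−1,j} + M(η^ch p̂ch_{t,j}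 − p̂dis_{t,j}/η^dis). Then for every pair of nonnegative families pch_{t,j}, pdis_{t,j} and energy levels e_{t,j} satisfying ∑_j pch_{t,j} = d_t, ∑_j pdis_{t,j} = g_t, e_{t,j} − e_{t−1,j} = M(η^ch pch_{t,j} − pdis_{t,j}/η^dis), 0 ≤ e_{t,j} ≤ ē_j for all t and j, and ∑_j e_{0,j} = e_0 with 0 ≤ e_{0,j} ≤ ē_j for all j, one has ∑_{t=1}^T ∑_{j=1}^J M c_j pdis_{t,j} ≥ ∑_{t=1}^T ∑_{j=1}^J M c_j p̂dis_{t,j}; that is, the greedy policy is a minimizer of the total cycle aging cost over all feasible segment-level implementations of the given dispatch profile. -/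
open Finset

/-- prefix sum over the first `k` segments -/
noncomputable def BatteryAux.psum {J : ℕ} (v : Fin J → ℝ) (k : ℕ) : ℝ :=
  ∑ j ∈ Finset.univ.filter (fun j : Fin J => (j : ℕ) < k), v j

namespace BatteryAux

variable {J : ℕ}

lemma filter_lt_fin (j : Fin J) :
    (Finset.univ.filter (fun ζ : Fin J => ζ < j)) =
    (Finset.univ.filter (fun ζ : Fin J => (ζ : ℕ) < (j : ℕ))) := by
  ext ζ; simp only [mem_filter, mem_univ, true_and, Fin.lt_def]

lemma psum_zero (v : Fin J → ℝ) : psum v 0 = 0 := by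
  simp [psum]

lemma psum_succ (v : Fin J → ℝ) {k : ℕ} (hk : k < J) :
    psum v (k + 1) = psum v k + v ⟨k, hk⟩ := by
  unfold psum
  have h : (Finset.univ.filter (fun j : Fin J => (j : ℕ) < k + 1)) =
      insert ⟨k, hk⟩ (Finset.univ.filter (fun j : Fin J => (j : ℕ) < k)) := by
    ext j
    simp only [mem_filter, mem_univ, true_and, mem_insert, Fin.ext_iff]
    omega
  rw [h, Finset.sum_insert (by simp)]
  ring

lemma psum_succ_of_ge (v : Fin J → ℝ) {k : ℕ} (hk : ¬ k < J) :
    psum v (k + 1) = psum v k := by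
  unfold psum
  congr 1
  ext j
  simp only [mem_filter, mem_univ, true_and]
  have := j.isLt; omega

lemma psum_univ (v : Fin J → ℝ) {k : ℕ} (hk : J ≤ k) :
    psum v k = ∑ j, v j := by
  unfold psum
  rw [Finset.filter_true_of_mem]
  intro j _; exact lt_of_lt_of_le j.isLt hk

lemma psum_prefix_eq (v : Fin J → ℝ) (j : Fin J) :
    (∑ ζ ∈ Finset.univ.filter (fun ζ => ζ < j), v ζ) = psum v (j : ℕ) := by
  rw [filter_lt_fin]; rfl

lemma psum_add (v w : Fin J → ℝ) (k : ℕ) :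
    psum (fun j => v j + w j) k = psum v k + psum w k := by
  unfold psum; rw [Finset.sum_add_distrib]

lemma psum_nonneg {v : Fin J → ℝ} (hv : ∀ j, 0 ≤ v j) (k : ℕ) : 0 ≤ psum v k :=
  Finset.sum_nonneg (fun j _ => hv j)

lemma psum_mono {v w : Fin J → ℝ} (h : ∀ j, v j ≤ w j) (k : ℕ) : psum v k ≤ psum w k :=
  Finset.sum_le_sum (fun j _ => h j)

lemma psum_le_total {v : Fin J → ℝ} (hv : ∀ j, 0 ≤ v j) (k : ℕ) :
    psum v k ≤ ∑ j, v j :=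
  Finset.sum_le_sum_of_subset_of_nonneg (Finset.filter_subset _ _)
    (fun j _ _ => hv j)

/-- key min algebra fact -/
lemma min_fill (A R r : ℝ) (hA : 0 ≤ A) (hr : 0 ≤ r) :
    min A R + min (A - min A R) r = min A (R + r) := by
  rcases le_total A R with h | h
  · rw [min_eq_left h, sub_self, min_eq_left hr, min_eq_left (by linarith), add_zero]
  · rw [min_eq_right h]
    rcases le_total (A - R) r with h2 | h2
    · rw [min_eq_left h2, min_eq_left (by linarith)]; ring
    · rw [min_eq_right h2, min_eq_right (by linarith)]

/-- The greedy-fill prefix-sum formula. -/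
lemma greedy_fill (A : ℝ) (hA : 0 ≤ A) (r f : Fin J → ℝ)
    (hr : ∀ j, 0 ≤ r j)
    (hf : ∀ j, f j = min (A - ∑ ζ ∈ Finset.univ.filter (fun ζ => ζ < j), f ζ) (r j)) :
    ∀ k : ℕ, psum f k = min A (psum r k) := by
  intro k
  induction k with
  | zero => simp [psum_zero, hA]
  | succ k ih =>
    by_cases hk : k < J
    · rw [psum_succ f hk, psum_succ r hk, hf ⟨k, hk⟩, psum_prefix_eq, ih]
      exact min_fill A (psum r k) (r ⟨k, hk⟩) hA (hr _)
    · rw [psum_succ_of_ge f hk, psum_succ_of_ge r hk, ih]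

lemma greedy_fill_bounds (A : ℝ) (hA : 0 ≤ A) (r f : Fin J → ℝ)
    (hr : ∀ j, 0 ≤ r j)
    (hf : ∀ j, f j = min (A - ∑ ζ ∈ Finset.univ.filter (fun ζ => ζ < j), f ζ) (r j)) :
    ∀ j, 0 ≤ f j ∧ f j ≤ r j := by
  intro j
  have h := greedy_fill A hA r f hr hf (j : ℕ)
  rw [hf j, psum_prefix_eq, h]
  refine ⟨le_min ?_ (hr j), min_le_right _ _⟩
  have : min A (psum r (j : ℕ)) ≤ A := min_le_left _ _
  linarith

end BatteryAux
namespace BatteryAux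
variable {J : ℕ}

lemma min_charge {E B dd α : ℝ} (hα : 0 < α) :
    E + α * min dd ((B - E) / α) = min (E + α * dd) B := by
  rcases le_total dd ((B - E) / α) with h | h
  · rw [min_eq_left h, min_eq_left]
    have := (le_div_iff₀ hα).mp h
    linarith
  · rw [min_eq_right h, min_eq_right]
    · field_simp; ring
    · have := (div_le_iff₀ hα).mp h
      linarith

lemma min_discharge {E gg β : ℝ} (hβ : 0 < β) :
    E - β * min gg (E / β) = max (E - β * gg) 0 := by
  rcases le_total gg (E / β) with h | h
  · rw [min_eq_left h, max_eq_left]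
    have := (le_div_iff₀ hβ).mp h
    linarith
  · rw [min_eq_right h, max_eq_right]
    · field_simp; ring
    · have := (div_le_iff₀ hβ).mp h
      linarith

/-- greedy fill formula for the initial state recursion -/
lemma greedy_fill0 (A : ℝ) (hA : 0 ≤ A) (r f : Fin J → ℝ) (hr : ∀ j, 0 ≤ r j)
    (hf : ∀ j, f j = min (r j)
      (max 0 (A - ∑ ζ ∈ Finset.univ.filter (fun ζ => ζ < j), f ζ))) :
    ∀ k : ℕ, psum f k = min A (psum r k) := by
  intro k
  induction k with
  | zero => simp [psum_zero, hA]
  | succ k ih =>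
    by_cases hk : k < J
    · rw [psum_succ f hk, psum_succ r hk, hf ⟨k, hk⟩, psum_prefix_eq, ih]
      have h1 : min A (psum r k) ≤ A := min_le_left _ _
      rw [max_eq_right (by linarith : (0:ℝ) ≤ A - min A (psum r k)),
        min_comm (r ⟨k, hk⟩)]
      exact min_fill A (psum r k) (r ⟨k, hk⟩) hA (hr _)
    · rw [psum_succ_of_ge f hk, psum_succ_of_ge r hk, ih]

end BatteryAux
lemma BatteryAux.nn_of_mul {c y : ℝ} (hc : 0 < c) (h : 0 ≤ c * y) : 0 ≤ y := by
  by_contra h'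
  push_neg at h'
  exact absurd h (not_le.mpr (mul_neg_of_pos_of_neg hc h'))
open Finset BatteryAux in
lemma BatteryAux.abel_nonneg {J : ℕ} (c y : Fin J → ℝ)
    (hc : ∀ j k : Fin J, j ≤ k → c j ≤ c k)
    (hY : ∀ k : ℕ, psum y k ≤ 0)
    (hYJ : (∑ j, y j) = 0) :
    0 ≤ ∑ j, c j * y j := by
  classical
  set C : ℕ → ℝ := fun n => if h : n < J then c ⟨n, h⟩ else 0 with hC
  set yN : ℕ → ℝ := fun n => if h : n < J then y ⟨n, h⟩ else 0 with hyN
  have hsum : ∀ m : ℕ, (∑ i ∈ range m, yN i) = psum y m := by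
    intro m; induction m with
    | zero => simp [psum_zero]
    | succ m ih =>
      rw [Finset.sum_range_succ, ih]
      by_cases hm : m < J
      · rw [psum_succ y hm]; simp [yN, hm]
      · rw [psum_succ_of_ge y hm]; simp [yN, hm]
  have hmain : (∑ j, c j * y j) = ∑ i ∈ range J, C i * yN i := by
    rw [← Fin.sum_univ_eq_sum_range (fun n => C n * yN n) J]
    apply Finset.sum_congr rfl
    intro j _
    simp [C, yN, j.isLt]
  have hbp := Finset.sum_range_by_parts C yN J
  simp only [smul_eq_mul] at hbp
  rw [hmain, hbp, hsum J, psum_univ y le_rfl, hYJ, mul_zero, zero_sub, neg_nonneg]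
  apply Finset.sum_nonpos
  intro i hi
  have hi' : i < J - 1 := Finset.mem_range.mp hi
  have h1 : i + 1 < J := by omega
  have h2 : i < J := by omega
  have hcc : C i ≤ C (i + 1) := by
    simp only [hC, dif_pos h1, dif_pos h2]
    exact hc _ _ (by simp only [Fin.mk_le_mk]; omega)
  rw [hsum (i + 1)]
  nlinarith [hY (i + 1)]


open Finset BatteryAux in

/-- Theorem 1 of the paper: optimality of the greedy (shallowest-segment-first)
policy. Given segment capacities `ē j ≥ 0`, nondecreasing marginal aging costs
`c`, interval duration `M > 0`, efficiencies `η^ch, η^dis ∈ (0,1]`, an initial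
energy `0 ≤ e₀ ≤ ∑ j, ē j`, and a dispatch profile `d t ≥ 0`, `g t ≥ 0`
(`t = 1,…,T`) with at most one of `d t, g t` nonzero and implied energy levels
`e t = e₀ + ∑_{s=1}^{t} M(η^ch d s − g s / η^dis)` staying in `[0, ∑ j, ē j]`,
the greedy policy
`ê 0 j = min (ē j) (max 0 (e₀ − ∑_{ζ<j} ê 0 ζ))`,
`p̂ch t j = min (d t − ∑_{ζ<j} p̂ch t ζ) ((ē j − ê (t−1) j)/(η^ch M))`,
`p̂dis t j = min (g t − ∑_{ζ<j} p̂dis t ζ) (η^dis · ê (t−1) j / M)`,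
`ê t j = ê (t−1) j + M(η^ch · p̂ch t j − p̂dis t j / η^dis)`
achieves a total cycle aging cost `∑_t ∑_j M · c j · p̂dis t j` no larger than
that of any feasible segment-level implementation of the same dispatch
profile. -/
theorem greedy_policy_minimizes_cycle_aging_cost
    (T J : ℕ)
    (ebar : Fin J → ℝ) (hebar : ∀ j, 0 ≤ ebar j)
    (c : Fin J → ℝ) (hc : ∀ j k : Fin J, j ≤ k → c j ≤ c k)
    (M : ℝ) (hM : 0 < M)
    (ηch ηdis : ℝ) (hηch : 0 < ηch) (hηch1 : ηch ≤ 1)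
    (hηdis : 0 < ηdis) (hηdis1 : ηdis ≤ 1)
    (e0 : ℝ) (he0 : 0 ≤ e0) (he0' : e0 ≤ ∑ j, ebar j)
    (d g : ℕ → ℝ)
    (hd : ∀ t ∈ Finset.Icc 1 T, 0 ≤ d t)
    (hg : ∀ t ∈ Finset.Icc 1 T, 0 ≤ g t)
    (hdg : ∀ t ∈ Finset.Icc 1 T, d t = 0 ∨ g t = 0)
    (eimp : ℕ → ℝ)
    (heimp : ∀ t, eimp t = e0 + ∑ s ∈ Finset.Icc 1 t, M * (ηch * d s - g s / ηdis))
    (heimpl : ∀ t ∈ Finset.Icc 1 T, 0 ≤ eimp t)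
    (heimpu : ∀ t ∈ Finset.Icc 1 T, eimp t ≤ ∑ j, ebar j)
    -- the greedy policy
    (ehat : ℕ → Fin J → ℝ) (pchhat pdishat : ℕ → Fin J → ℝ)
    (hehat0 : ∀ j, ehat 0 j =
      min (ebar j)
        (max 0 (e0 - ∑ ζ ∈ Finset.univ.filter (fun ζ => ζ < j), ehat 0 ζ)))
    (hpchhat : ∀ t ∈ Finset.Icc 1 T, ∀ j, pchhat t j =
      min (d t - ∑ ζ ∈ Finset.univ.filter (fun ζ => ζ < j), pchhat t ζ)
        ((ebar j - ehat (t - 1) j) / (ηch * M)))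
    (hpdishat : ∀ t ∈ Finset.Icc 1 T, ∀ j, pdishat t j =
      min (g t - ∑ ζ ∈ Finset.univ.filter (fun ζ => ζ < j), pdishat t ζ)
        (ηdis * ehat (t - 1) j / M))
    (hehat : ∀ t ∈ Finset.Icc 1 T, ∀ j, ehat t j =
      ehat (t - 1) j + M * (ηch * pchhat t j - pdishat t j / ηdis))
    -- an arbitrary feasible segment-level implementation of the same profile
    (eseg : ℕ → Fin J → ℝ) (pch pdis : ℕ → Fin J → ℝ)
    (hpch0 : ∀ t ∈ Finset.Icc 1 T, ∀ j, 0 ≤ pch t j)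
    (hpdis0 : ∀ t ∈ Finset.Icc 1 T, ∀ j, 0 ≤ pdis t j)
    (hpchsum : ∀ t ∈ Finset.Icc 1 T, (∑ j, pch t j) = d t)
    (hpdissum : ∀ t ∈ Finset.Icc 1 T, (∑ j, pdis t j) = g t)
    (heseg : ∀ t ∈ Finset.Icc 1 T, ∀ j, eseg t j - eseg (t - 1) j =
      M * (ηch * pch t j - pdis t j / ηdis))
    (hesegl : ∀ t ≤ T, ∀ j, 0 ≤ eseg t j)
    (hesegu : ∀ t ≤ T, ∀ j, eseg t j ≤ ebar j)
    (heseg0 : (∑ j, eseg 0 j) = e0) :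
    ∑ t ∈ Finset.Icc 1 T, ∑ j, M * c j * pdishat t j ≤
      ∑ t ∈ Finset.Icc 1 T, ∑ j, M * c j * pdis t j := by
  classical
  have hMdis : 0 < M / ηdis := by positivity
  have heimp0 : eimp 0 = e0 := by simp [heimp 0]
  have hrec : ∀ t ∈ Finset.Icc 1 T,
      eimp t = eimp (t - 1) + M * (ηch * d t - g t / ηdis) := by
    intro t ht
    obtain ⟨ht1, htT⟩ := Finset.mem_Icc.mp ht
    obtain ⟨s, rfl⟩ : ∃ s, t = s + 1 := ⟨t - 1, by omega⟩
    rw [heimp (s + 1), Finset.sum_Icc_succ_top (by omega : 1 ≤ s + 1),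
      Nat.add_sub_cancel, heimp s]
    ring
  have heL : ∀ t, t ≤ T → 0 ≤ eimp t := by
    intro t ht
    rcases Nat.eq_zero_or_pos t with h | h
    · rw [h, heimp0]; exact he0
    · exact heimpl t (Finset.mem_Icc.mpr ⟨h, ht⟩)
  have heU : ∀ t, t ≤ T → eimp t ≤ ∑ j, ebar j := by
    intro t ht
    rcases Nat.eq_zero_or_pos t with h | h
    · rw [h, heimp0]; exact he0'
    · exact heimpu t (Finset.mem_Icc.mpr ⟨h, ht⟩)
  -- per-step analysis of the greedy policy
  have step : ∀ t ∈ Finset.Icc 1 T, (∀ j, 0 ≤ ehat (t - 1) j ∧ ehat (t - 1) j ≤ ebar j) →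
      (∀ j, 0 ≤ ehat t j ∧ ehat t j ≤ ebar j) ∧
      (∀ k, psum (pchhat t) k =
        min (d t) ((psum ebar k - psum (ehat (t - 1)) k) / (ηch * M))) ∧
      (∀ k, psum (pdishat t) k = min (g t) (ηdis * psum (ehat (t - 1)) k / M)) ∧
      (∀ k, psum (ehat t) k = psum (ehat (t - 1)) k
          + (ηch * M) * psum (pchhat t) k - (M / ηdis) * psum (pdishat t) k) := by
    intro t ht IH
    have hdt := hd t ht
    have hgt := hg t ht
    have hrch : ∀ j, 0 ≤ (ebar j - ehat (t - 1) j) / (ηch * M) := fun j =>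
      div_nonneg (by linarith [(IH j).2]) (by positivity)
    have hrdis : ∀ j, 0 ≤ ηdis * ehat (t - 1) j / M := fun j =>
      div_nonneg (mul_nonneg hηdis.le (IH j).1) hM.le
    have hch := greedy_fill (d t) hdt _ (pchhat t) hrch (hpchhat t ht)
    have hchb := greedy_fill_bounds (d t) hdt _ (pchhat t) hrch (hpchhat t ht)
    have hdis := greedy_fill (g t) hgt _ (pdishat t) hrdis (hpdishat t ht)
    have hdisb := greedy_fill_bounds (g t) hgt _ (pdishat t) hrdis (hpdishat t ht)
    refine ⟨?_, ?_, ?_, ?_⟩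
    · intro j
      obtain ⟨hc1, hc2⟩ := hchb j
      obtain ⟨hd1, hd2⟩ := hdisb j
      rw [hehat t ht j]
      have key1 : M * (pdishat t j / ηdis) ≤ ehat (t - 1) j := by
        have h3 : M * (pdishat t j / ηdis) ≤
            M * ((ηdis * ehat (t - 1) j / M) / ηdis) := by gcongr
        calc M * (pdishat t j / ηdis)
            ≤ M * ((ηdis * ehat (t - 1) j / M) / ηdis) := h3
          _ = ehat (t - 1) j := by field_simp
      have key2 : M * (ηch * pchhat t j) ≤ ebar j - ehat (t - 1) j := by
        have h3 : M * (ηch * pchhat t j) ≤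
            M * (ηch * ((ebar j - ehat (t - 1) j) / (ηch * M))) := by gcongr
        calc M * (ηch * pchhat t j)
            ≤ M * (ηch * ((ebar j - ehat (t - 1) j) / (ηch * M))) := h3
          _ = ebar j - ehat (t - 1) j := by field_simp
      have hpchnn : 0 ≤ M * (ηch * pchhat t j) := by positivity
      have hpdnn : 0 ≤ M * (pdishat t j / ηdis) := by positivity
      have hexp : M * (ηch * pchhat t j - pdishat t j / ηdis)
          = M * (ηch * pchhat t j) - M * (pdishat t j / ηdis) := by ring
      rw [hexp]
      exact ⟨by linarith [(IH j).1], by linarith⟩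
    · intro k
      rw [hch k]
      congr 1
      unfold BatteryAux.psum
      rw [← Finset.sum_div, ← Finset.sum_sub_distrib]
    · intro k
      rw [hdis k]
      congr 1
      unfold BatteryAux.psum
      rw [← Finset.sum_div, ← Finset.mul_sum]
    · intro k
      unfold BatteryAux.psum
      rw [Finset.mul_sum, Finset.mul_sum, ← Finset.sum_add_distrib,
        ← Finset.sum_sub_distrib]
      apply Finset.sum_congr rfl
      intro j _
      rw [hehat t ht j]
      ring
  have ehat0sum : ∀ k, psum (ehat 0) k = min e0 (psum ebar k) :=
    greedy_fill0 e0 he0 ebar (ehat 0) hebar hehat0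
  -- greedy state invariant
  have ginv : ∀ t, t ≤ T →
      (∀ j, 0 ≤ ehat t j ∧ ehat t j ≤ ebar j) ∧ psum (ehat t) J = eimp t := by
    intro t
    induction t with
    | zero =>
      intro _
      refine ⟨fun j => ⟨?_, ?_⟩, ?_⟩
      · rw [hehat0 j]; exact le_min (hebar j) (le_max_left _ _)
      · rw [hehat0 j]; exact min_le_left _ _
      · rw [ehat0sum J, psum_univ ebar le_rfl, min_eq_left he0', heimp0]
    | succ s ih =>
      intro hsT
      obtain ⟨ihb, ihs⟩ := ih (by omega)
      have hmem : s + 1 ∈ Finset.Icc 1 T := Finset.mem_Icc.mpr ⟨by omega, hsT⟩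
      have hs1 : s + 1 - 1 = s := rfl
      obtain ⟨hb, hchpre, hdispre, hpre⟩ := step (s + 1) hmem (by rw [hs1]; exact ihb)
      rw [hs1] at hchpre hdispre hpre
      refine ⟨hb, ?_⟩
      rw [hpre J, hchpre J, hdispre J, ihs, psum_univ ebar le_rfl]
      rcases hdg (s + 1) hmem with hcs | hcs
      · -- d (s+1) = 0 : discharge step
        rw [hcs]
        rw [min_eq_left (div_nonneg (by linarith [heU s (by omega)]) (by positivity))]
        rw [mul_zero, add_zero]
        have harg : ηdis * eimp s / M = eimp s / (M / ηdis) := by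
          rw [div_div_eq_mul_div]; ring
        rw [harg, min_discharge hMdis]
        have he1 : eimp (s + 1) = eimp s - M / ηdis * g (s + 1) := by
          rw [hrec (s + 1) hmem, hs1, hcs]; ring
        rw [← he1, max_eq_left (heL (s + 1) hsT)]
      · -- g (s+1) = 0 : charge step
        rw [hcs]
        rw [min_eq_left (div_nonneg (mul_nonneg hηdis.le (heL s (by omega))) hM.le)]
        rw [mul_zero, sub_zero, min_charge (by positivity : (0:ℝ) < ηch * M)]
        have he1 : eimp (s + 1) = eimp s + ηch * M * d (s + 1) := by
          rw [hrec (s + 1) hmem, hs1, hcs]; ring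
        rw [← he1, min_eq_left (heU (s + 1) hsT)]
  -- the greedy policy discharges g t in total at each time
  have htot : ∀ t ∈ Finset.Icc 1 T, (∑ j, pdishat t j) = g t := by
    intro t ht
    obtain ⟨ht1, htT⟩ := Finset.mem_Icc.mp ht
    obtain ⟨_, _, hdispre, _⟩ := step t ht (ginv (t - 1) (by omega)).1
    rw [← psum_univ (pdishat t) (le_refl J), hdispre J, (ginv (t - 1) (by omega)).2]
    rcases hdg t ht with hcs | hcs
    · apply min_eq_left
      have he1 : eimp t = eimp (t - 1) - M * (g t / ηdis) := by
        rw [hrec t ht, hcs]; ring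
      have h0 : 0 ≤ eimp t := heL t htT
      rw [le_div_iff₀ hM]
      have h3 : g t * M / ηdis ≤ eimp (t - 1) := by
        have h2 : M * (g t / ηdis) = g t * M / ηdis := by ring
        linarith [he1, h0, h2.symm.le, h2.le]
      have h4 := (div_le_iff₀ hηdis).mp h3
      linarith
    · rw [hcs]
      exact min_eq_left (div_nonneg (mul_nonneg hηdis.le (heL (t - 1) (by omega))) hM.le)
  -- the main comparison, prefix by prefix
  have comp : ∀ k : ℕ,
      0 ≤ ∑ s ∈ Finset.Icc 1 T, (psum (pdishat s) k - psum (pdis s) k) := by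
    intro k
    suffices h : ∀ t, t ≤ T →
        0 ≤ (∑ s ∈ Finset.Icc 1 t, (psum (pdishat s) k - psum (pdis s) k)) ∧
        psum (eseg t) k ≤ psum (ehat t) k
          + (M / ηdis) * (∑ s ∈ Finset.Icc 1 t, (psum (pdishat s) k - psum (pdis s) k)) by
      exact (h T le_rfl).1
    intro t
    induction t with
    | zero =>
      intro _
      rw [Finset.Icc_eq_empty (by omega), Finset.sum_empty, mul_zero, add_zero]
      refine ⟨le_refl 0, ?_⟩
      rw [ehat0sum k]
      apply le_min
      · rw [← heseg0]; exact psum_le_total (hesegl 0 (Nat.zero_le T)) k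
      · exact psum_mono (hesegu 0 (Nat.zero_le T)) k
    | succ s ih =>
      intro hsT
      obtain ⟨ih1, ih2⟩ := ih (by omega)
      have hmem : s + 1 ∈ Finset.Icc 1 T := Finset.mem_Icc.mpr ⟨by omega, hsT⟩
      have hs1 : s + 1 - 1 = s := rfl
      obtain ⟨hb, hchpre, hdispre, hpre⟩ :=
        step (s + 1) hmem (by rw [hs1]; exact (ginv s (by omega)).1)
      rw [hs1] at hchpre hdispre hpre
      have hEnn : 0 ≤ psum (ehat s) k :=
        psum_nonneg (fun j => ((ginv s (by omega)).1 j).1) k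
      have hsegrec : psum (eseg (s + 1)) k = psum (eseg s) k
          + (ηch * M) * psum (pch (s + 1)) k - (M / ηdis) * psum (pdis (s + 1)) k := by
        unfold BatteryAux.psum
        rw [Finset.mul_sum, Finset.mul_sum, ← Finset.sum_add_distrib,
          ← Finset.sum_sub_distrib]
        apply Finset.sum_congr rfl
        intro j _
        have h1 := heseg (s + 1) hmem j
        rw [hs1] at h1
        have h2 : eseg (s + 1) j
            = eseg s j + M * (ηch * pch (s + 1) j - pdis (s + 1) j / ηdis) := by
          linarith [h1]
        rw [h2]; ring
      rw [Finset.sum_Icc_succ_top (by omega : 1 ≤ s + 1)]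
      set S := ∑ u ∈ Finset.Icc 1 s, (psum (pdishat u) k - psum (pdis u) k) with hS
      have hbnn : 0 ≤ psum (pdis (s + 1)) k := psum_nonneg (hpdis0 (s + 1) hmem) k
      have hble : psum (pdis (s + 1)) k ≤ g (s + 1) := by
        rw [← hpdissum (s + 1) hmem]; exact psum_le_total (hpdis0 (s + 1) hmem) k
      have hann : 0 ≤ psum (pch (s + 1)) k := psum_nonneg (hpch0 (s + 1) hmem) k
      have hale : psum (pch (s + 1)) k ≤ d (s + 1) := by
        rw [← hpchsum (s + 1) hmem]; exact psum_le_total (hpch0 (s + 1) hmem) k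
      rcases hdg (s + 1) hmem with hcs | hcs
      · -- discharge step : d (s+1) = 0
        have ha0 : psum (pch (s + 1)) k = 0 :=
          le_antisymm (by rw [hcs] at hale; exact hale) hann
        have hach0 : psum (pchhat (s + 1)) k = 0 := by
          rw [hchpre k, hcs]
          exact min_eq_left (div_nonneg
            (sub_nonneg.mpr (psum_mono (fun j => ((ginv s (by omega)).1 j).2) k))
            (by positivity))
        have hxnn : 0 ≤ psum (eseg (s + 1)) k := psum_nonneg (hesegl (s + 1) hsT) k
        have hkey : (M / ηdis) * psum (pdis (s + 1)) k ≤ psum (eseg s) k := by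
          rw [ha0] at hsegrec
          have := hsegrec
          linarith [hxnn]
        have hbhat : psum (pdishat (s + 1)) k
            = min (g (s + 1)) (ηdis * psum (ehat s) k / M) := hdispre k
        constructor
        · rcases le_total (g (s + 1)) (ηdis * psum (ehat s) k / M) with h | h
          · rw [hbhat, min_eq_left h]
            linarith [hble, ih1]
          · rw [hbhat, min_eq_right h]
            have h5 : (M / ηdis) * (ηdis * psum (ehat s) k / M) = psum (ehat s) k := by
              field_simp
            have h6 : (M / ηdis) * psum (pdis (s + 1)) k
                ≤ (M / ηdis) * (ηdis * psum (ehat s) k / M) + (M / ηdis) * S := by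
              rw [h5]; linarith [hkey, ih2]
            have hexp : (M / ηdis) * (S + (ηdis * psum (ehat s) k / M
                - psum (pdis (s + 1)) k))
                = (M / ηdis) * S + (M / ηdis) * (ηdis * psum (ehat s) k / M)
                  - (M / ηdis) * psum (pdis (s + 1)) k := by ring
            have h7 : 0 ≤ (M / ηdis) * (S + (ηdis * psum (ehat s) k / M
                - psum (pdis (s + 1)) k)) := by
              rw [hexp]; linarith [h6]
            exact nn_of_mul hMdis h7
        · have hxh : psum (ehat (s + 1)) k
              = psum (ehat s) k - (M / ηdis) * psum (pdishat (s + 1)) k := by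
            rw [hpre k, hach0]; ring
          have hx : psum (eseg (s + 1)) k
              = psum (eseg s) k - (M / ηdis) * psum (pdis (s + 1)) k := by
            rw [hsegrec, ha0]; ring
          rw [hx, hxh]
          have hexp : (M / ηdis) * (S + (psum (pdishat (s + 1)) k
              - psum (pdis (s + 1)) k))
              = (M / ηdis) * S + (M / ηdis) * psum (pdishat (s + 1)) k
                - (M / ηdis) * psum (pdis (s + 1)) k := by ring
          linarith [ih2, hexp]
      · -- charge step : g (s+1) = 0
        have hb0 : psum (pdis (s + 1)) k = 0 :=
          le_antisymm (by rw [hcs] at hble; exact hble) hbnn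
        have hbh0 : psum (pdishat (s + 1)) k = 0 := by
          rw [hdispre k, hcs]
          exact min_eq_left (div_nonneg (mul_nonneg hηdis.le hEnn) hM.le)
        constructor
        · rw [hb0, hbh0]; linarith [ih1]
        · have hxh : psum (ehat (s + 1)) k
              = min (psum (ehat s) k + (ηch * M) * d (s + 1)) (psum ebar k) := by
            rw [hpre k, hbh0, hchpre k, mul_zero, sub_zero]
            exact min_charge (by positivity)
          have hx : psum (eseg (s + 1)) k
              = psum (eseg s) k + (ηch * M) * psum (pch (s + 1)) k := by
            rw [hsegrec, hb0]; ring
          have hxB : psum (eseg (s + 1)) k ≤ psum ebar k :=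
            psum_mono (hesegu (s + 1) hsT) k
          rw [hbh0, hb0]
          have hc0 : (M / ηdis) * (S + ((0:ℝ) - 0)) = (M / ηdis) * S := by ring
          rw [hc0]
          have hSnn : 0 ≤ (M / ηdis) * S := mul_nonneg hMdis.le ih1
          rw [hxh, ← min_add_add_right]
          apply le_min
          · have h8 : (ηch * M) * psum (pch (s + 1)) k ≤ (ηch * M) * d (s + 1) :=
              mul_le_mul_of_nonneg_left hale (by positivity)
            rw [hx]
            linarith [ih2, h8]
          · linarith [hxB, hSnn]
  -- assemble via Abel summation
  set y : Fin J → ℝ := fun j => ∑ t ∈ Finset.Icc 1 T, (pdis t j - pdishat t j) with hy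
  have hYpre : ∀ k, psum y k ≤ 0 := by
    intro k
    have hswap : psum y k
        = ∑ t ∈ Finset.Icc 1 T, (psum (pdis t) k - psum (pdishat t) k) := by
      unfold BatteryAux.psum
      simp only [hy]
      rw [Finset.sum_comm]
      apply Finset.sum_congr rfl
      intro t _
      rw [Finset.sum_sub_distrib]
    have hneg : ∑ t ∈ Finset.Icc 1 T, (psum (pdis t) k - psum (pdishat t) k)
        = -∑ t ∈ Finset.Icc 1 T, (psum (pdishat t) k - psum (pdis t) k) := by
      rw [← Finset.sum_neg_distrib]
      apply Finset.sum_congr rfl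
      intro t _
      ring
    rw [hswap, hneg]
    linarith [comp k]
  have hYJ : (∑ j, y j) = 0 := by
    simp only [hy]
    rw [Finset.sum_comm]
    apply Finset.sum_eq_zero
    intro t ht
    rw [Finset.sum_sub_distrib, hpdissum t ht, htot t ht, sub_self]
  have habel := abel_nonneg c y hc hYpre hYJ
  have hfin : (∑ t ∈ Finset.Icc 1 T, ∑ j, M * c j * pdis t j)
      - (∑ t ∈ Finset.Icc 1 T, ∑ j, M * c j * pdishat t j) = M * ∑ j, c j * y j := by
    rw [Finset.sum_comm (s := Finset.Icc 1 T) (t := Finset.univ),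
      Finset.sum_comm (s := Finset.Icc 1 T) (t := Finset.univ),
      ← Finset.sum_sub_distrib, Finset.mul_sum]
    apply Finset.sum_congr rfl
    intro j _
    simp only [hy, Finset.mul_sum]
    rw [← Finset.sum_sub_distrib]
    apply Finset.sum_congr rfl
    intro t _
    ring
  linarith [mul_nonneg hM.le habel, hfin]
end

section
/- Consider T time intervals and J cycle-depth segments with segment capacities ē_j ≥ 0, interval duration M > 0, efficiencies η^ch, η^dis ∈ (0,1], an initial stored energy e_0 with 0 ≤ e_0 ≤ ∑_j ē_j, and a dispatch profile d_t ≥ 0, g_t ≥ 0 (t = 1,…,T) such that for each t at most one of d_t, g_t is nonzero and the implied energy levels e_t = e_0 + ∑_{s=1}^{t} M(η^ch d_s − g_s/η^dis) satisfy 0 ≤ e_t ≤ ∑_j ē_j for all t. Define the greedy policy recursively: ê_{0,j} = min(ē_j, max(0, e_0 − ∑_{ζ<j} ê_{0,ζ})), and for each t (in increasing j) p̂ch_{t,j} = min(d_t − ∑_{ζ<j} p̂ch_{t,ζ}, (ē_j − ê_{t−1,j})/(η^ch M)), p̂dis_{t,j} = min(g_t − ∑_{ζ<j} p̂dis_{t,ζ},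 η^dis ê_{t−1,j}/M), ê_{t,j} = ê_{t−1,j} + M(η^ch p̂ch_{t,j} − p̂dis_{t,j}/η^dis). Then the greedy policy is feasible: for all t and j, p̂ch_{t,j} ≥ 0, p̂dis_{t,j} ≥ 0, 0 ≤ ê_{t,j} ≤ ē_j, ∑_j p̂ch_{t,j} = d_t, ∑_j p̂dis_{t,j} = g_t, and ∑_j ê_{t,j} = e_t. -/
lemma greedy_aux2 {J : ℕ} (f h : Fin J → ℝ) (b : ℝ) (hb : 0 ≤ b) (hh : ∀ j, 0 ≤ h j)
    (hf : ∀ j : Fin J, (∑ ζ ∈ Finset.univ.filter (fun ζ => ζ < j), f ζ) ≤ b →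
      f j = min (b - ∑ ζ ∈ Finset.univ.filter (fun ζ => ζ < j), f ζ) (h j)) :
    (∀ j, 0 ≤ f j ∧ f j ≤ h j) ∧ (∑ j, f j) = min b (∑ j, h j) := by
  have main : ∀ n, n ≤ J → ∑ ζ ∈ Finset.univ.filter (fun ζ : Fin J => ζ.val < n), f ζ =
      min b (∑ ζ ∈ Finset.univ.filter (fun ζ : Fin J => ζ.val < n), h ζ) := by
    intro n
    induction n with
    | zero => intro _; simp [min_eq_right hb]
    | succ n ih =>
      intro hn
      have hnJ : n < J := hn
      have hins : (Finset.univ.filter (fun ζ : Fin J => ζ.val < n + 1)) =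
          insert (⟨n, hnJ⟩ : Fin J) (Finset.univ.filter (fun ζ : Fin J => ζ.val < n)) := by
        ext ζ
        simp only [Finset.mem_filter, Finset.mem_univ, true_and, Finset.mem_insert, Fin.ext_iff]
        omega
      have hnot : (⟨n, hnJ⟩ : Fin J) ∉ Finset.univ.filter (fun ζ : Fin J => ζ.val < n) := by simp
      have hlt : (Finset.univ.filter (fun ζ : Fin J => ζ < (⟨n, hnJ⟩ : Fin J))) =
          Finset.univ.filter (fun ζ : Fin J => ζ.val < n) := by
        ext ζ; simp only [Finset.mem_filter, Finset.mem_univ, true_and, Fin.lt_def]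
      have hSn := ih (Nat.le_of_succ_le hn)
      have hfj := hf ⟨n, hnJ⟩ (by rw [hlt, hSn]; exact min_le_left _ _)
      rw [hlt, hSn] at hfj
      rw [hins, Finset.sum_insert hnot, Finset.sum_insert hnot, hfj, hSn]
      set H := ∑ ζ ∈ Finset.univ.filter (fun ζ : Fin J => ζ.val < n), h ζ with hH
      have hhj : (0:ℝ) ≤ h ⟨n, hnJ⟩ := hh _
      rcases le_total b H with h1 | h1
      · rw [min_eq_left h1, sub_self, min_eq_left hhj, min_eq_left (by linarith)]
        ring
      · rw [min_eq_right h1]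
        rcases le_total (b - H) (h ⟨n, hnJ⟩) with h2 | h2
        · rw [min_eq_left h2, min_eq_left (by linarith)]
          ring
        · rw [min_eq_right h2, min_eq_right (by linarith)]
  have huniv : (Finset.univ.filter (fun ζ : Fin J => ζ.val < J)) = Finset.univ := by
    apply Finset.filter_true_of_mem; intro ζ _; exact ζ.isLt
  constructor
  · intro j
    have hlt : (Finset.univ.filter (fun ζ : Fin J => ζ < j)) =
        Finset.univ.filter (fun ζ : Fin J => ζ.val < j.val) := by
      ext ζ; simp only [Finset.mem_filter, Finset.mem_univ, true_and, Fin.lt_def]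
    have hSj : (∑ ζ ∈ Finset.univ.filter (fun ζ : Fin J => ζ < j), f ζ) ≤ b := by
      rw [hlt, main j.val (le_of_lt j.isLt)]; exact min_le_left _ _
    have hfj := hf j hSj
    refine ⟨?_, ?_⟩
    · rw [hfj]; exact le_min (by linarith) (hh j)
    · rw [hfj]; exact min_le_right _ _
  · have := main J le_rfl
    rwa [huniv] at this

/-- Feasibility of the greedy (shallowest-segment-first) policy (the policy of
Theorem 1 of the paper): given segment capacities `ē j ≥ 0`, interval duration
`M > 0`, efficiencies `η^ch, η^dis ∈ (0,1]`, an initial energy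
`0 ≤ e₀ ≤ ∑ j, ē j`, and a dispatch profile `d t ≥ 0`, `g t ≥ 0` (for
`t = 1,…,T`) with at most one of `d t, g t` nonzero and implied energy levels
`e t = e₀ + ∑_{s=1}^{t} M(η^ch d s − g s / η^dis)` staying in
`[0, ∑ j, ē j]`, the greedy policy
`ê 0 j = min (ē j) (max 0 (e₀ − ∑_{ζ<j} ê 0 ζ))`,
`p̂ch t j = min (d t − ∑_{ζ<j} p̂ch t ζ) ((ē j − ê (t−1) j)/(η^ch M))`,
`p̂dis t j = min (g t − ∑_{ζ<j} p̂dis t ζ) (η^dis · ê (t−1) j / M)`,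
`ê t j = ê (t−1) j + M(η^ch · p̂ch t j − p̂dis t j / η^dis)`
is feasible: all segment powers are nonnegative, all segment energy levels stay
within `[0, ē j]`, the segment powers sum to the dispatch profile, and the
segment energy levels sum to the implied energy level. -/
theorem greedy_policy_feasible
    (T J : ℕ)
    (ebar : Fin J → ℝ) (hebar : ∀ j, 0 ≤ ebar j)
    (M : ℝ) (hM : 0 < M)
    (ηch ηdis : ℝ) (hηch : 0 < ηch) (hηch1 : ηch ≤ 1)
    (hηdis : 0 < ηdis) (hηdis1 : ηdis ≤ 1)
    (e0 : ℝ) (he0 : 0 ≤ e0) (he0' : e0 ≤ ∑ j, ebar j)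
    (d g : ℕ → ℝ)
    (hd : ∀ t ∈ Finset.Icc 1 T, 0 ≤ d t)
    (hg : ∀ t ∈ Finset.Icc 1 T, 0 ≤ g t)
    (hdg : ∀ t ∈ Finset.Icc 1 T, d t = 0 ∨ g t = 0)
    (e : ℕ → ℝ)
    (he : ∀ t, e t = e0 + ∑ s ∈ Finset.Icc 1 t, M * (ηch * d s - g s / ηdis))
    (hel : ∀ t ∈ Finset.Icc 1 T, 0 ≤ e t)
    (heu : ∀ t ∈ Finset.Icc 1 T, e t ≤ ∑ j, ebar j)
    (ehat : ℕ → Fin J → ℝ) (pch pdis : ℕ → Fin J → ℝ)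
    (hehat0 : ∀ j, ehat 0 j =
      min (ebar j)
        (max 0 (e0 - ∑ ζ ∈ Finset.univ.filter (fun ζ => ζ < j), ehat 0 ζ)))
    (hpch : ∀ t ∈ Finset.Icc 1 T, ∀ j, pch t j =
      min (d t - ∑ ζ ∈ Finset.univ.filter (fun ζ => ζ < j), pch t ζ)
        ((ebar j - ehat (t - 1) j) / (ηch * M)))
    (hpdis : ∀ t ∈ Finset.Icc 1 T, ∀ j, pdis t j =
      min (g t - ∑ ζ ∈ Finset.univ.filter (fun ζ => ζ < j), pdis t ζ)
        (ηdis * ehat (t - 1) j / M))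
    (hehat : ∀ t ∈ Finset.Icc 1 T, ∀ j, ehat t j =
      ehat (t - 1) j + M * (ηch * pch t j - pdis t j / ηdis)) :
    ∀ t ∈ Finset.Icc 1 T,
      (∀ j, 0 ≤ pch t j) ∧ (∀ j, 0 ≤ pdis t j) ∧
      (∀ j, 0 ≤ ehat t j ∧ ehat t j ≤ ebar j) ∧
      (∑ j, pch t j) = d t ∧ (∑ j, pdis t j) = g t ∧
      (∑ j, ehat t j) = e t := by
  have he00 : e 0 = e0 := by rw [he 0]; simp
  have key : ∀ t, t ≤ T →
      ((∀ j, 0 ≤ ehat t j ∧ ehat t j ≤ ebar j) ∧ (∑ j, ehat t j) = e t) ∧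
      (1 ≤ t →
        (∀ j, 0 ≤ pch t j) ∧ (∀ j, 0 ≤ pdis t j) ∧
        (∑ j, pch t j) = d t ∧ (∑ j, pdis t j) = g t) := by
    intro t
    induction t with
    | zero =>
      intro _
      refine ⟨?_, by omega⟩
      have h0 := greedy_aux2 (ehat 0) ebar e0 he0 hebar ?_
      · exact ⟨h0.1, by rw [h0.2, he00, min_eq_left he0']⟩
      · intro j hj
        rw [hehat0 j, max_eq_right (by linarith), min_comm]
    | succ t ih =>
      intro ht
      obtain ⟨⟨hE, hS⟩, -⟩ := ih (Nat.le_of_succ_le ht)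
      have htt : t + 1 ∈ Finset.Icc 1 T := by
        simp only [Finset.mem_Icc]; omega
      have hchpos : (0:ℝ) < ηch * M := mul_pos hηch hM
      have hhch : ∀ j, 0 ≤ (ebar j - ehat t j) / (ηch * M) := fun j =>
        div_nonneg (by linarith [(hE j).2]) hchpos.le
      have hhdis : ∀ j, 0 ≤ ηdis * ehat t j / M := fun j =>
        div_nonneg (mul_nonneg hηdis.le (hE j).1) hM.le
      have hch := greedy_aux2 (pch (t+1)) (fun j => (ebar j - ehat t j) / (ηch * M))
        (d (t+1)) (hd _ htt) hhch (fun j _ => hpch (t+1) htt j)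
      have hdis := greedy_aux2 (pdis (t+1)) (fun j => ηdis * ehat t j / M)
        (g (t+1)) (hg _ htt) hhdis (fun j _ => hpdis (t+1) htt j)
      have hestep : e (t+1) = e t + M * (ηch * d (t+1) - g (t+1) / ηdis) := by
        rw [he (t+1), he t, Finset.sum_Icc_succ_top (Nat.le_add_left 1 t)]
        ring
      have hsumh : ∑ j, (ebar j - ehat t j) / (ηch * M) = ((∑ j, ebar j) - e t) / (ηch * M) := by
        rw [← Finset.sum_div, Finset.sum_sub_distrib, hS]
      have hsumhd : ∑ j, ηdis * ehat t j / M = ηdis * e t / M := by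
        rw [← Finset.sum_div, ← Finset.mul_sum, hS]
      have hdval : (∑ j, pch (t+1) j) = d (t+1) := by
        rcases hdg (t+1) htt with h0 | h0
        · rw [hch.2, h0]
          exact min_eq_left (Finset.sum_nonneg fun j _ => hhch j)
        · rw [hch.2, hsumh]
          refine min_eq_left ?_
          rw [le_div_iff₀ hchpos]
          have hu := heu (t+1) htt
          rw [hestep, h0] at hu
          rw [zero_div] at hu
          nlinarith
      have hgval : (∑ j, pdis (t+1) j) = g (t+1) := by
        rcases hdg (t+1) htt with h0 | h0
        · rw [hdis.2, hsumhd]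
          refine min_eq_left ?_
          rw [le_div_iff₀ hM]
          have h1 := hel (t+1) htt
          rw [hestep, h0] at h1
          have h3 : M * (g (t+1) / ηdis) ≤ e t := by nlinarith
          have h4 := mul_le_mul_of_nonneg_left h3 hηdis.le
          have h5 : ηdis * (M * (g (t+1) / ηdis)) = g (t+1) * M := by
            field_simp
          nlinarith
        · rw [hdis.2, h0]
          exact min_eq_left (Finset.sum_nonneg fun j _ => hhdis j)
      have hEnew : ∀ j, 0 ≤ ehat (t+1) j ∧ ehat (t+1) j ≤ ebar j := by
        intro j
        have h1 := hch.1 j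
        have h2 := hdis.1 j
        have e1 : pch (t+1) j * (ηch * M) ≤ ebar j - ehat t j :=
          (le_div_iff₀ hchpos).mp h1.2
        have e2 : pdis (t+1) j / ηdis * M ≤ ehat t j := by
          rw [div_mul_eq_mul_div, div_le_iff₀ hηdis]
          have := (le_div_iff₀ hM).mp h2.2
          linarith
        have e3 : 0 ≤ M * (ηch * pch (t+1) j) :=
          mul_nonneg hM.le (mul_nonneg hηch.le h1.1)
        have e4 : 0 ≤ M * (pdis (t+1) j / ηdis) :=
          mul_nonneg hM.le (div_nonneg h2.1 hηdis.le)
        have h5 : ehat (t+1) j = ehat t j + M * (ηch * pch (t+1) j - pdis (t+1) j / ηdis) :=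
          hehat (t+1) htt j
        rw [h5]
        constructor
        · nlinarith
        · nlinarith
      have hSnew : (∑ j, ehat (t+1) j) = e (t+1) := by
        have h1 : (∑ j, ehat (t+1) j) =
            ∑ j, (ehat t j + M * (ηch * pch (t+1) j - pdis (t+1) j / ηdis)) :=
          Finset.sum_congr rfl fun j _ => hehat (t+1) htt j
        rw [h1, Finset.sum_add_distrib, hS, ← Finset.mul_sum, Finset.sum_sub_distrib,
          ← Finset.mul_sum, ← Finset.sum_div, hdval, hgval, hestep]
      exact ⟨⟨hEnew, hSnew⟩, fun _ =>
        ⟨fun j => (hch.1 j).1, fun j => (hdis.1 j).1, hdval, hgval⟩⟩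
  intro t ht
  have h1 : 1 ≤ t ∧ t ≤ T := Finset.mem_Icc.mp ht
  obtain ⟨⟨hE, hS⟩, hG⟩ := key t h1.2
  obtain ⟨a, b, c, dd⟩ := hG h1.1
  exact ⟨a, b, hE, c, dd, hS⟩
end

section
/- Let J ∈ ℕ, let q : Fin J → ℝ satisfy q_j ≥ 0 for all j, and let g ∈ ℝ satisfy 0 ≤ g ≤ ∑_j q_j. Define the greedy allocation p̂ : Fin J → ℝ recursively (in increasing j) by p̂_j = min(g − ∑_{ζ<j} p̂_ζ, q_j). Then for every nondecreasing cost vector c : Fin J → ℝ (i.e., c_j ≤ c_k whenever j ≤ k) and every p : Fin J → ℝ with 0 ≤ p_j ≤ q_j for all j and ∑_j p_j = g, one has ∑_j c_j p_j ≥ ∑_j c_j p̂_j. -/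
/-- Single-interval optimality of the greedy (cheapest-first) allocation:
given capacities `q j ≥ 0` and a demand `0 ≤ g ≤ ∑ j, q j`, the greedy
allocation `p̂ j = min (g - ∑_{ζ < j} p̂ ζ) (q j)` minimizes the linear cost
`∑ j, c j * p j` over all feasible allocations `p`, whenever the cost
vector `c` is nondecreasing in the segment index. -/
theorem greedy_allocation_optimal
    (J : ℕ) (q : Fin J → ℝ) (hq : ∀ j, 0 ≤ q j)
    (g : ℝ) (hg0 : 0 ≤ g) (hg1 : g ≤ ∑ j, q j)
    (phat : Fin J → ℝ)
    (hphat : ∀ j, phat j =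
      min (g - ∑ ζ ∈ Finset.univ.filter (fun ζ => ζ < j), phat ζ) (q j))
    (c : Fin J → ℝ) (hc : ∀ j k, j ≤ k → c j ≤ c k)
    (p : Fin J → ℝ) (hp0 : ∀ j, 0 ≤ p j) (hpq : ∀ j, p j ≤ q j)
    (hps : ∑ j, p j = g) :
    ∑ j, c j * phat j ≤ ∑ j, c j * p j := by
  classical
  -- extended functions on ℕ
  set phat' : ℕ → ℝ := fun i => if h : i < J then phat ⟨i, h⟩ else 0 with hphat'
  set p' : ℕ → ℝ := fun i => if h : i < J then p ⟨i, h⟩ else 0 with hp'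
  set q' : ℕ → ℝ := fun i => if h : i < J then q ⟨i, h⟩ else 0 with hq'
  set c' : ℕ → ℝ := fun i => if h : i < J then c ⟨i, h⟩ else 0 with hc'
  set A : ℕ → ℝ := fun k => ∑ i ∈ Finset.range k, phat' i with hA
  set B : ℕ → ℝ := fun k => ∑ i ∈ Finset.range k, p' i with hB
  set Qs : ℕ → ℝ := fun k => ∑ i ∈ Finset.range k, q' i with hQs
  -- generic transfer of full sums
  have hfull : ∀ (f : Fin J → ℝ) (f' : ℕ → ℝ),
      (∀ i (h : i < J), f' i = f ⟨i, h⟩) → ∑ j, f j = ∑ i ∈ Finset.range J, f' i := by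
    intro f f' hf
    rw [← Fin.sum_univ_eq_sum_range f' J]
    exact Finset.sum_congr rfl fun j _ => by rw [hf j.1 j.2]
  -- prefix sums over Fin equal prefix sums over ℕ
  have hfin : ∀ j : Fin J,
      (∑ ζ ∈ Finset.univ.filter (fun ζ => ζ < j), phat ζ) = A (j : ℕ) := by
    intro j
    rw [Finset.sum_filter]
    have h1 : ∑ ζ : Fin J, (if ζ < j then phat ζ else 0)
        = ∑ i ∈ Finset.range J, (if i < (j : ℕ) then phat' i else 0) := by
      rw [← Fin.sum_univ_eq_sum_range (fun i => if i < (j : ℕ) then phat' i else 0) J]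
      refine Finset.sum_congr rfl fun ζ _ => ?_
      by_cases hζ : ζ < j
      · rw [if_pos hζ, if_pos (show (ζ : ℕ) < (j : ℕ) from hζ)]
        simp [hphat', ζ.2]
      · rw [if_neg hζ, if_neg (show ¬ (ζ : ℕ) < (j : ℕ) from hζ)]
    rw [h1, ← Finset.sum_filter]
    have h2 : (Finset.range J).filter (fun i => i < (j : ℕ)) = Finset.range (j : ℕ) := by
      ext i
      simp only [Finset.mem_filter, Finset.mem_range]
      have := j.2
      omega
    rw [h2, hA]
  -- the greedy recursion in ℕ form
  have hrec : ∀ k, k < J → phat' k = min (g - A k) (q' k) := by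
    intro k hk
    have h := hphat ⟨k, hk⟩
    rw [hfin ⟨k, hk⟩] at h
    simp only [hphat', hq', dif_pos hk]
    exact h
  -- A k = min g (Qs k) for k ≤ J
  have hQsJ : g ≤ Qs J := by
    have h : Qs J = ∑ j, q j := (hfull q q' (fun i h => by simp [hq', dif_pos h])).symm
    rw [h]; exact hg1
  have hAeq : ∀ k, k ≤ J → A k = min g (Qs k) := by
    intro k hk
    induction k with
    | zero => simp [hA, hQs, hg0]
    | succ n ih =>
      have hn : n < J := hk
      have iH := ih (Nat.le_of_lt hn)
      have hstep : A (n + 1) = A n + phat' n := Finset.sum_range_succ _ _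
      rw [hstep, hrec n hn, iH]
      have hQ1 : Qs (n + 1) = Qs n + q' n := Finset.sum_range_succ _ _
      have hq'n : 0 ≤ q' n := by simp only [hq', dif_pos hn]; exact hq _
      rcases le_total g (Qs n) with h | h
      · rw [min_eq_left h, hQ1, min_eq_left (by linarith), min_eq_left (by linarith)]
        ring
      · rw [min_eq_right h, hQ1]
        rcases le_total (g - Qs n) (q' n) with h2 | h2
        · rw [min_eq_left h2, min_eq_left (by linarith)]; ring
        · rw [min_eq_right h2, min_eq_right (by linarith)]
  have hAJ : A J = g := by rw [hAeq J le_rfl, min_eq_left hQsJ]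
  -- B k ≤ g
  have hBJ : B J = g := by
    rw [← hps]
    exact (hfull p p' (fun i h => by simp [hp', dif_pos h])).symm
  have hBle : ∀ k, k ≤ J → B k ≤ g := by
    intro k hk
    rw [← hBJ]
    apply Finset.sum_le_sum_of_subset_of_nonneg (Finset.range_subset_range.2 hk)
    intro i _ _
    simp only [hp']
    split
    · exact hp0 _
    · exact le_rfl
  -- B k ≤ A k
  have hBA : ∀ k, k ≤ J → B k ≤ A k := by
    intro k hk
    induction k with
    | zero => simp [hA, hB]
    | succ n ih =>
      have hn : n < J := hk
      have iH := ih (Nat.le_of_lt hn)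
      have hA1 : A (n + 1) = A n + phat' n := Finset.sum_range_succ _ _
      have hB1 : B (n + 1) = B n + p' n := Finset.sum_range_succ _ _
      rw [hA1, hB1, hrec n hn]
      rcases le_total (g - A n) (q' n) with h | h
      · rw [min_eq_left h]
        have hb := hBle (n + 1) hk
        rw [hB1] at hb
        linarith
      · rw [min_eq_right h]
        have hpn : p' n ≤ q' n := by
          simp only [hp', hq', dif_pos hn]; exact hpq _
        linarith
  -- Abel summation
  have hmain : ∑ i ∈ Finset.range J, c' i * (phat' i - p' i) ≤ 0 := by
    have habel := Finset.sum_range_by_parts (M := ℝ) c' (fun i => phat' i - p' i) J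
    simp only [smul_eq_mul] at habel
    rw [habel]
    have hG : ∀ k, ∑ i ∈ Finset.range k, (phat' i - p' i) = A k - B k := by
      intro k
      rw [hA, hB, Finset.sum_sub_distrib]
    rw [hG J, hAJ, hBJ, sub_self, mul_zero, zero_sub, neg_nonpos]
    apply Finset.sum_nonneg
    intro i hi
    have hi' : i + 1 ≤ J := by
      have := Finset.mem_range.1 hi; omega
    rw [hG (i + 1)]
    have h1 : c' i ≤ c' (i + 1) := by
      have hiJ : i < J := by omega
      have hi1J : i + 1 < J := by
        have := Finset.mem_range.1 hi; omega
      simp only [hc', dif_pos hiJ, dif_pos hi1J]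
      exact hc _ _ (by simp [Fin.le_def])
    have h2 : B (i + 1) ≤ A (i + 1) := hBA (i + 1) hi'
    nlinarith
  -- conclude
  have hl : ∑ j, c j * phat j = ∑ i ∈ Finset.range J, c' i * phat' i :=
    hfull _ (fun i => c' i * phat' i)
      (fun i h => by simp [hc', hphat', dif_pos h])
  have hr : ∑ j, c j * p j = ∑ i ∈ Finset.range J, c' i * p' i :=
    hfull _ (fun i => c' i * p' i)
      (fun i h => by simp [hc', hp', dif_pos h])
  have hsplit : ∑ i ∈ Finset.range J, c' i * (phat' i - p' i)
      = ∑ i ∈ Finset.range J, c' i * phat' i - ∑ i ∈ Finset.range J, c' i * p' i := by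
    rw [← Finset.sum_sub_distrib]
    exact Finset.sum_congr rfl fun i _ => by ring
  rw [hl, hr]
  linarith [hsplit ▸ hmain]
end

section
/- Let Φ : ℝ → ℝ be continuous on [0,1] with Φ(0) = 0, let n ∈ ℕ, and let δ_1, …, δ_n ∈ [0,1]. Then lim_{J→∞} ∑_{j=1}^{J} (Φ(j/J) − Φ((j−1)/J)) · #{i ∈ {1,…,n} : j/J ≤ δ_i} = ∑_{i=1}^{n} Φ(δ_i); that is, as the number of linearization segments tends to infinity, the piecewise-linear cycle aging model assigns to a profile with discharge cycle depths δ_1, …, δ_n exactly the benchmark aging ∑_i Φ(δ_i). -/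
/-- Convergence of the piecewise-linear cycle aging model to the benchmark
rainflow aging: if `Φ` is continuous on `[0,1]` with `Φ 0 = 0`, then for any
cycle depths `δ₁,…,δₙ ∈ [0,1]`,
`∑_{j=1}^{J} (Φ(j/J) − Φ((j−1)/J)) · #{i : j/J ≤ δᵢ} → ∑_i Φ(δᵢ)` as `J → ∞`. -/
theorem piecewise_linear_aging_tendsto_benchmark
    (Φ : ℝ → ℝ) (hΦ : ContinuousOn Φ (Set.Icc (0 : ℝ) 1)) (hΦ0 : Φ 0 = 0)
    (n : ℕ) (δ : Fin n → ℝ) (hδ : ∀ i, δ i ∈ Set.Icc (0 : ℝ) 1) :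
    Filter.Tendsto
      (fun J : ℕ =>
        ∑ j ∈ Finset.Icc 1 J,
          (Φ ((j : ℝ) / J) - Φ (((j : ℝ) - 1) / J)) *
            ((Finset.univ.filter (fun i => (j : ℝ) / J ≤ δ i)).card : ℝ))
      Filter.atTop (nhds (∑ i, Φ (δ i))) := by
  have key : ∀ J : ℕ, 1 ≤ J →
      (∑ j ∈ Finset.Icc 1 J,
          (Φ ((j : ℝ) / J) - Φ (((j : ℝ) - 1) / J)) *
            ((Finset.univ.filter (fun i => (j : ℝ) / J ≤ δ i)).card : ℝ))
        = ∑ i, Φ ((⌊(J : ℝ) * δ i⌋₊ : ℝ) / J) := by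
    intro J hJ
    have hJ0 : (0 : ℝ) < J := by exact_mod_cast hJ
    have step1 : (∑ j ∈ Finset.Icc 1 J,
        (Φ ((j : ℝ) / J) - Φ (((j : ℝ) - 1) / J)) *
          ((Finset.univ.filter (fun i => (j : ℝ) / J ≤ δ i)).card : ℝ))
        = ∑ i, ∑ j ∈ (Finset.Icc 1 J).filter (fun j : ℕ => (j : ℝ) / J ≤ δ i),
            (Φ ((j : ℝ) / J) - Φ (((j : ℝ) - 1) / J)) := by
      have e1 : ∀ j ∈ Finset.Icc 1 J,
          (Φ ((j : ℝ) / J) - Φ (((j : ℝ) - 1) / J)) *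
            ((Finset.univ.filter (fun i => (j : ℝ) / J ≤ δ i)).card : ℝ)
          = ∑ i ∈ Finset.univ.filter (fun i => (j : ℝ) / J ≤ δ i),
              (Φ ((j : ℝ) / J) - Φ (((j : ℝ) - 1) / J)) := by
        intro j _
        rw [Finset.sum_const, nsmul_eq_mul, mul_comm]
      rw [Finset.sum_congr rfl e1]
      exact Finset.sum_comm' (fun j i => by
        simp only [Finset.mem_filter, Finset.mem_univ, true_and, and_true])
    rw [step1]
    refine Finset.sum_congr rfl fun i _ => ?_
    set m : ℕ := ⌊(J : ℝ) * δ i⌋₊ with hm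
    have hx0 : (0 : ℝ) ≤ δ i := (hδ i).1
    have hx1 : δ i ≤ 1 := (hδ i).2
    have hmJ : m ≤ J := by
      have : (J : ℝ) * δ i ≤ (J : ℝ) := by nlinarith
      calc m ≤ ⌊(J : ℝ)⌋₊ := Nat.floor_le_floor this
        _ = J := Nat.floor_natCast J
    have hfilter : (Finset.Icc 1 J).filter (fun j : ℕ => (j : ℝ) / J ≤ δ i)
        = Finset.Icc 1 m := by
      ext j
      simp only [Finset.mem_filter, Finset.mem_Icc]
      constructor
      · rintro ⟨⟨h1, _⟩, hle⟩
        refine ⟨h1, ?_⟩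
        rw [div_le_iff₀ hJ0] at hle
        exact Nat.le_floor (by linarith [hle])
      · rintro ⟨h1, h2⟩
        refine ⟨⟨h1, le_trans h2 hmJ⟩, ?_⟩
        rw [div_le_iff₀ hJ0]
        have := Nat.floor_le (a := (J : ℝ) * δ i) (by positivity)
        have hjm : (j : ℝ) ≤ (m : ℝ) := by exact_mod_cast h2
        linarith [this]
    rw [hfilter]
    have := Finset.sum_range_sub (f := fun k : ℕ => Φ ((k : ℝ) / J)) m
    have hIcc : ∑ j ∈ Finset.Icc 1 m, (Φ ((j : ℝ) / J) - Φ (((j : ℝ) - 1) / J))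
        = ∑ k ∈ Finset.range m, (Φ (((k : ℕ) + 1 : ℝ) / J) - Φ ((k : ℝ) / J)) := by
      rw [← Finset.Ico_add_one_right_eq_Icc, Finset.sum_Ico_eq_sum_range]
      refine Finset.sum_congr (by simp) fun k _ => ?_
      push_cast
      ring_nf
    rw [hIcc]
    have htel : ∑ k ∈ Finset.range m, (Φ (((k : ℕ) + 1 : ℝ) / J) - Φ ((k : ℝ) / J))
        = Φ ((m : ℝ) / J) - Φ ((0 : ℝ) / J) := by
      have := Finset.sum_range_sub (f := fun k : ℕ => Φ ((k : ℝ) / J)) m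
      simpa [add_comm] using this
    rw [htel]
    simp [hΦ0]
  -- now the limit of the simplified expression
  have hlim : Filter.Tendsto
      (fun J : ℕ => ∑ i, Φ ((⌊(J : ℝ) * δ i⌋₊ : ℝ) / J))
      Filter.atTop (nhds (∑ i, Φ (δ i))) := by
    refine tendsto_finset_sum _ fun i _ => ?_
    have hx0 : (0 : ℝ) ≤ δ i := (hδ i).1
    have hx1 : δ i ≤ 1 := (hδ i).2
    have hup : ∀ J : ℕ, 1 ≤ J → (⌊(J : ℝ) * δ i⌋₊ : ℝ) / J ≤ δ i := by
      intro J hJ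
      have hJ0 : (0 : ℝ) < J := by exact_mod_cast hJ
      rw [div_le_iff₀ hJ0]
      have := Nat.floor_le (a := (J : ℝ) * δ i) (by positivity)
      linarith [this]
    have hlo : ∀ J : ℕ, 1 ≤ J → δ i - 1 / J ≤ (⌊(J : ℝ) * δ i⌋₊ : ℝ) / J := by
      intro J hJ
      have hJ0 : (0 : ℝ) < J := by exact_mod_cast hJ
      rw [le_div_iff₀ hJ0, sub_mul, one_div, inv_mul_cancel₀ (ne_of_gt hJ0)]
      have := Nat.lt_floor_add_one ((J : ℝ) * δ i)
      nlinarith [this]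
    have hsq : Filter.Tendsto (fun J : ℕ => (⌊(J : ℝ) * δ i⌋₊ : ℝ) / J)
        Filter.atTop (nhds (δ i)) := by
      have hL : Filter.Tendsto (fun J : ℕ => δ i - 1 / (J : ℝ)) Filter.atTop
          (nhds (δ i)) := by
        have := (tendsto_const_nhds (x := δ i) (f := Filter.atTop (α := ℕ))).sub
          tendsto_one_div_atTop_nhds_zero_nat
        simpa using this
      refine tendsto_of_tendsto_of_tendsto_of_le_of_le' hL tendsto_const_nhds ?_ ?_
      · exact Filter.eventually_atTop.2 ⟨1, hlo⟩
      · exact Filter.eventually_atTop.2 ⟨1, hup⟩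
    have hwithin : Filter.Tendsto (fun J : ℕ => (⌊(J : ℝ) * δ i⌋₊ : ℝ) / J)
        Filter.atTop (nhdsWithin (δ i) (Set.Icc 0 1)) := by
      rw [tendsto_nhdsWithin_iff]
      refine ⟨hsq, Filter.eventually_atTop.2 ⟨1, fun J hJ => ?_⟩⟩
      have hJ0 : (0 : ℝ) < J := by exact_mod_cast hJ
      exact ⟨by positivity, le_trans (hup J hJ) hx1⟩
    exact ((hΦ (δ i) (hδ i)).tendsto).comp hwithin
  refine hlim.congr' ?_
  filter_upwards [Filter.eventually_atTop.2 ⟨1, fun J (hJ : 1 ≤ J) => hJ⟩] with J hJ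
  exact (key J hJ).symm
end

section
/- Let Φ : ℝ → ℝ, let R > 0, η > 0, E > 0, M > 0, let J ∈ ℕ with J ≥ 1, and let k ∈ ℕ with k ≤ J. Define segment capacities q_j = η·E/(J·M) for each j = 1,…,J, segment costs c_j = (R/(η·E))·J·(Φ(j/J) − Φ((j−1)/J)), demand g = k·η·E/(J·M), and the greedy allocation p̂ : Fin J → ℝ recursively (in increasing j) by p̂_j = min(g − ∑_{ζ<j} p̂_ζ, q_j). Then the total modeled aging cost satisfies M·∑_{j=1}^{J} c_j·p̂_j = R·(Φ(k/J) − Φ(0)); that is, a single discharge of depth k/J from a fully charged battery is charged exactly the prorated replacement cost of the aging Φ(k/J) − Φ(0). -/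
/-- Consistency of the proposed model with the prorated benchmark aging cost
for a single discharge from a fully charged battery: with segment capacities
`q j = η·E/(J·M)`, segment costs `c j = (R/(η·E))·J·(Φ(j/J) − Φ((j−1)/J))`,
demand `g = k·η·E/(J·M)` and the greedy allocation
`p̂ j = min (g − ∑_{ζ<j} p̂ ζ) (q j)`, the total modeled aging cost satisfies
`M·∑_j c j · p̂ j = R·(Φ(k/J) − Φ(0))`. -/
theorem greedy_discharge_cost_eq_prorated_aging
    (Φ : ℝ → ℝ) (R η E M : ℝ) (hR : 0 < R) (hη : 0 < η) (hE : 0 < E) (hM : 0 < M)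
    (J : ℕ) (hJ : 1 ≤ J) (k : ℕ) (hk : k ≤ J)
    (q : Fin J → ℝ) (hq : ∀ j, q j = η * E / (J * M))
    (c : Fin J → ℝ)
    (hc : ∀ j : Fin J, c j = R / (η * E) * J *
      (Φ (((j : ℕ) + 1 : ℝ) / J) - Φ (((j : ℕ) : ℝ) / J)))
    (g : ℝ) (hg : g = k * η * E / (J * M))
    (phat : Fin J → ℝ)
    (hphat : ∀ j, phat j =
      min (g - ∑ ζ ∈ Finset.univ.filter (fun ζ => ζ < j), phat ζ) (q j)) :
    M * ∑ j, c j * phat j = R * (Φ ((k : ℝ) / J) - Φ 0) := by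
  have hJR : (0:ℝ) < (J:ℝ) := by exact_mod_cast Nat.lt_of_lt_of_le Nat.zero_lt_one hJ
  set u : ℝ := η * E / (J * M) with hu_def
  have hu : 0 < u := by positivity
  have hg' : g = (k:ℝ) * u := by rw [hg, hu_def]; ring
  -- partial sums of phat
  have hT : ∀ n, n ≤ J →
      ∑ ζ ∈ Finset.univ.filter (fun ζ : Fin J => (ζ:ℕ) < n), phat ζ
        = ((min n k : ℕ) : ℝ) * u := by
    intro n
    induction n with
    | zero => intro _; simp
    | succ n ih =>
      intro hn
      have hnJ : n < J := hn
      have hset : Finset.univ.filter (fun ζ : Fin J => (ζ:ℕ) < n+1)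
          = insert ⟨n, hnJ⟩ (Finset.univ.filter (fun ζ : Fin J => (ζ:ℕ) < n)) := by
        ext ζ
        simp only [Finset.mem_filter, Finset.mem_univ, true_and, Finset.mem_insert,
          Fin.ext_iff]
        omega
      have hnotmem : (⟨n, hnJ⟩ : Fin J) ∉
          Finset.univ.filter (fun ζ : Fin J => (ζ:ℕ) < n) := by simp
      rw [hset, Finset.sum_insert hnotmem, ih (le_of_lt hnJ)]
      have hfil : (Finset.univ.filter (fun ζ : Fin J => ζ < (⟨n, hnJ⟩ : Fin J)))
          = Finset.univ.filter (fun ζ : Fin J => (ζ:ℕ) < n) := by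
        ext ζ; simp [Fin.lt_def]
      have hp := hphat ⟨n, hnJ⟩
      rw [hfil, ih (le_of_lt hnJ), hg', hq] at hp
      by_cases hcase : n < k
      · have hmin : min n k = n := by omega
        have hk1 : (n:ℝ) + 1 ≤ (k:ℝ) := by exact_mod_cast hcase
        have hpu : phat ⟨n, hnJ⟩ = u := by
          rw [hp, hmin]
          have : u ≤ (k:ℝ) * u - (n:ℝ) * u := by nlinarith [hu.le]
          rw [min_eq_right this]
        rw [hpu, hmin]
        have hmin2 : min (n+1) k = n+1 := by omega
        rw [hmin2]; push_cast; ring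
      · have hmin : min n k = k := by omega
        have hpu : phat ⟨n, hnJ⟩ = 0 := by
          rw [hp, hmin, sub_self]
          exact min_eq_left hu.le
        rw [hpu, hmin]
        have hmin2 : min (n+1) k = k := by omega
        rw [hmin2]; ring
  -- explicit form of phat
  have hP : ∀ j : Fin J, phat j = if (j:ℕ) < k then u else 0 := by
    intro j
    have hfil : (Finset.univ.filter (fun ζ : Fin J => ζ < j))
        = Finset.univ.filter (fun ζ : Fin J => (ζ:ℕ) < (j:ℕ)) := rfl
    have hp := hphat j
    rw [hfil, hT j j.isLt.le, hg', hq] at hp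
    by_cases hcase : (j:ℕ) < k
    · have hmin : min (j:ℕ) k = (j:ℕ) := by omega
      have hk1 : ((j:ℕ):ℝ) + 1 ≤ (k:ℝ) := by exact_mod_cast hcase
      rw [hp, hmin, if_pos hcase]
      have : u ≤ (k:ℝ) * u - ((j:ℕ):ℝ) * u := by nlinarith [hu.le]
      rw [min_eq_right this]
    · have hmin : min (j:ℕ) k = k := by omega
      rw [hp, hmin, if_neg hcase, sub_self]
      exact min_eq_left hu.le
  -- compute the sum
  have hsum : ∑ j, c j * phat j
      = ∑ i ∈ Finset.range J, (if i < k then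
          R / (η * E) * J * (Φ (((i:ℝ) + 1) / J) - Φ ((i:ℝ) / J)) * u else 0) := by
    rw [← Fin.sum_univ_eq_sum_range
      (fun i => if i < k then
        R / (η * E) * J * (Φ (((i:ℝ) + 1) / J) - Φ ((i:ℝ) / J)) * u else 0) J]
    refine Finset.sum_congr rfl fun j _ => ?_
    rw [hc j, hP j]
    by_cases hcase : (j:ℕ) < k
    · rw [if_pos hcase, if_pos hcase]
    · rw [if_neg hcase, if_neg hcase, mul_zero]
  have hsum2 : ∑ i ∈ Finset.range J, (if i < k then
        R / (η * E) * J * (Φ (((i:ℝ) + 1) / J) - Φ ((i:ℝ) / J)) * u else 0)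
      = ∑ i ∈ Finset.range k,
          R / (η * E) * J * (Φ (((i:ℝ) + 1) / J) - Φ ((i:ℝ) / J)) * u := by
    rw [← Finset.sum_subset (Finset.range_subset_range.mpr hk)]
    · refine Finset.sum_congr rfl fun i hi => ?_
      rw [if_pos (Finset.mem_range.mp hi)]
    · intro i _ hni
      rw [if_neg (by simpa using hni)]
  have htel : ∑ i ∈ Finset.range k,
      R / (η * E) * J * (Φ (((i:ℝ) + 1) / J) - Φ ((i:ℝ) / J)) * u
      = R / (η * E) * J * u * (Φ ((k:ℝ) / J) - Φ 0) := by
    have h0 : ∑ i ∈ Finset.range k,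
        (Φ ((((i+1) : ℕ):ℝ) / J) - Φ (((i:ℕ):ℝ) / J))
        = Φ (((k:ℕ):ℝ) / J) - Φ (((0:ℕ):ℝ) / J) :=
      Finset.sum_range_sub (fun i => Φ (((i:ℕ):ℝ) / J)) k
    have h1 : ∑ i ∈ Finset.range k,
        (Φ (((i:ℝ) + 1) / J) - Φ ((i:ℝ) / J)) = Φ ((k:ℝ) / J) - Φ 0 := by
      push_cast at h0
      simpa using h0
    calc ∑ i ∈ Finset.range k,
        R / (η * E) * J * (Φ (((i:ℝ) + 1) / J) - Φ ((i:ℝ) / J)) * u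
        = R / (η * E) * J * u * ∑ i ∈ Finset.range k,
            (Φ (((i:ℝ) + 1) / J) - Φ ((i:ℝ) / J)) := by
          rw [Finset.mul_sum]; refine Finset.sum_congr rfl fun i _ => by ring
      _ = R / (η * E) * J * u * (Φ ((k:ℝ) / J) - Φ 0) := by rw [h1]
  rw [hsum, hsum2, htel, hu_def]
  have hηE : η * E ≠ 0 := by positivity
  have hJM : (J:ℝ) * M ≠ 0 := by positivity
  field_simp
end
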